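/- Let d ≥ 2 be an integer and let α = 0. Set C₀ = (2^{(d−1)/2} κ_{d−1} / (d κ_d²))^{1/(2d)}, and for λ > 0 set u_λ = √2 · C₀ · λ^{1/(2d)}. Then for every fixed h ≥ 0, lim_{λ → ∞} φ_{λ,0,u_λ}(h) = h^{(d−1)/2}. -/

import Mathlib

open MeasureTheory Real Filter

/-- `kappa j` is the Lebesgue volume of the unit ball in `ℝ^j`. -/
noncomputable def kappa (j : ℕ) : ℝ :=
  (volume (Metric.ball (0 : EuclideanSpace ℝ (Fin j)) 1)).toReal

/-- Normalized surface area `s₁` of a spherical cap of height `h` (equals `1` for `h > 2`). -/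
noncomputable def s1 (d : ℕ) (h : ℝ) : ℝ :=
  if h ≤ 2 then
    (((d : ℝ) - 1) * kappa (d - 1) / ((d : ℝ) * kappa d)) *
      ∫ θ in (0:ℝ)..(Real.arccos (1 - h)), (Real.sin θ) ^ (d - 2)
  else 1

/-- The function `g_{λ,α,u}(h)`. -/
noncomputable def gfun (lam al u h : ℝ) : ℝ :=
  min (max ((lam ^ al / u ^ 2 * h - (1 / 2) * (1 + lam ^ al) / u ^ 4 * h ^ 2) /
      (1 - h / u ^ 2)) 0) 2

/-- The density `φ_{λ,α,u}(h)`. -/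
noncomputable def phi (d : ℕ) (lam al u h : ℝ) : ℝ :=
  lam * (1 + lam ^ al) ^ d / u ^ (d + 1) / (kappa d * lam ^ ((d : ℝ) * al)) *
    s1 d (gfun lam al u h) * (1 - h / u ^ 2) ^ (d - 1)

/-!
For `α = 0` the quadratic correction in `g` cancels exactly: `g_{λ,0,u}(h) = ε := h / u²`.
Since `u_λ^{2d} = 2^d B λ` with `B = C₀^{2d}`, the prefactor `λ 2^d / (κ_d u^{d+1})` equals
`h^{(d-1)/2} / (κ_d B ε^{(d-1)/2})`, so
`φ = h^{(d-1)/2} · (s₁(ε) / ε^{(d-1)/2}) / (κ_d B) · (1 - ε)^{d-1}` with `ε → 0⁺`.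
The cap asymptotics `s₁(ε) ~ 2^{(d-1)/2} κ_{d-1} / (d κ_d) · ε^{(d-1)/2} = κ_d B ε^{(d-1)/2}`
follow from `arccos (1 - ε) ~ √(2ε)` and `∫₀^θ sin^{d-2} ~ θ^{d-1} / (d - 1)` (L'Hôpital).
-/

open Topology

lemma kappa_pos (j : ℕ) : 0 < kappa j :=
  ENNReal.toReal_pos (Metric.measure_ball_pos _ _ one_pos).ne' measure_ball_lt_top.ne

lemma tendsto_arccos_one_sub_nhdsGT :
    Tendsto (fun ε : ℝ => arccos (1 - ε)) (𝓝[>] 0) (𝓝[>] 0) := by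
  refine tendsto_nhdsWithin_iff.mpr ⟨?_, ?_⟩
  · exact ((continuous_arccos.comp (continuous_const.sub continuous_id)).tendsto' 0 0
      (by simp)).mono_left nhdsWithin_le_nhds
  · filter_upwards [self_mem_nhdsWithin] with ε (hε : 0 < ε)
    exact arccos_pos.mpr (by linarith)

lemma sqrt_eq_sqrt_two_mul_sin_arccos_one_sub_div_two {ε : ℝ} (h0 : 0 ≤ ε) (h2 : ε ≤ 2) :
    √ε = √2 * sin (arccos (1 - ε) / 2) := by
  set θ := arccos (1 - ε)
  have hθ : ε = 2 * sin (θ / 2) ^ 2 := by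
    rw [sin_sq_eq_half_sub, mul_div_cancel₀ θ two_ne_zero, cos_arccos (by linarith) (by linarith)]
    ring
  have hsin : 0 ≤ sin (θ / 2) :=
    sin_nonneg_of_nonneg_of_le_pi (by positivity [arccos_nonneg (1 - ε)])
      (by linarith [arccos_le_pi (1 - ε), pi_pos])
  rw [hθ, sqrt_mul zero_le_two, sqrt_sq hsin]

lemma tendsto_arccos_one_sub_div_sqrt :
    Tendsto (fun ε : ℝ => arccos (1 - ε) / √ε) (𝓝[>] 0) (𝓝 √2) := by
  have hsinc : Continuous fun ε : ℝ => sinc (arccos (1 - ε) / 2) := by fun_prop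
  have hlim : Tendsto (fun ε : ℝ => √2 / sinc (arccos (1 - ε) / 2)) (𝓝 0) (𝓝 √2) := by
    convert (tendsto_const_nhds (x := √2)).div (hsinc.tendsto 0) (by simp) using 2 <;> simp
  refine (hlim.mono_left nhdsWithin_le_nhds).congr' ?_
  filter_upwards [Ioo_mem_nhdsGT (show (0 : ℝ) < 2 by norm_num)] with ε ⟨h0, h2⟩
  -- with `θ = arccos (1 - ε)`: `θ / √ε = θ / (√2 sin (θ / 2)) = √2 / sinc (θ / 2)`
  have hθ : arccos (1 - ε) / 2 ≠ 0 := by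
    have := arccos_pos.mpr (show 1 - ε < 1 by linarith)
    positivity
  rw [sqrt_eq_sqrt_two_mul_sin_arccos_one_sub_div_two h0.le h2.le, sinc_of_ne_zero hθ]
  field_simp
  norm_num [mul_comm]

lemma tendsto_integral_sin_pow_div_pow (n : ℕ) :
    Tendsto (fun θ : ℝ => (∫ t in (0 : ℝ)..θ, sin t ^ n) / θ ^ (n + 1)) (𝓝[>] 0)
      (𝓝 (1 / (n + 1))) := by
  have hF : Continuous fun t : ℝ => sin t ^ n := by fun_prop
  refine HasDerivAt.lhopital_zero_nhdsGT (f' := fun θ => sin θ ^ n)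
    (g' := fun θ => (n + 1 : ℝ) * θ ^ n) ?_ ?_ ?_ ?_ ?_ ?_
  · exact .of_forall fun θ => (hF.integral_hasStrictDerivAt 0 θ).hasDerivAt
  · exact .of_forall fun θ => by simpa using hasDerivAt_pow (n + 1) θ
  · filter_upwards [self_mem_nhdsWithin] with θ (hθ : 0 < θ)
    positivity
  · exact ((intervalIntegral.continuous_primitive hF.intervalIntegrable 0).tendsto' 0 0 (by simp)).mono_left
      nhdsWithin_le_nhds
  · exact ((continuous_pow (n + 1)).tendsto' 0 0 (by simp)).mono_left nhdsWithin_le_nhds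
  · have : Tendsto (fun θ : ℝ => sinc θ ^ n / (n + 1)) (𝓝 0) (𝓝 (1 / (n + 1))) := by
      simpa using ((continuous_sinc.pow n).tendsto 0).div_const ((n : ℝ) + 1)
    refine (this.mono_left nhdsWithin_le_nhds).congr' ?_
    filter_upwards [self_mem_nhdsWithin] with θ (hθ : 0 < θ)
    rw [sinc_of_ne_zero hθ.ne', div_pow]
    field_simp

lemma rpow_natCast_div_two {x : ℝ} (hx : 0 ≤ x) (n : ℕ) : x ^ ((n : ℝ) / 2) = √x ^ n := by
  rw [rpow_div_two_eq_sqrt _ hx, rpow_natCast]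

lemma tendsto_s1_div_rpow {d : ℕ} (hd : 2 ≤ d) :
    Tendsto (fun ε => s1 d ε / ε ^ (((d : ℝ) - 1) / 2)) (𝓝[>] 0)
      (𝓝 (2 ^ (((d : ℝ) - 1) / 2) * kappa (d - 1) / (d * kappa d))) := by
  obtain ⟨m, rfl⟩ : ∃ m, d = m + 2 := ⟨d - 2, by omega⟩
  have hcast : ((m + 2 : ℕ) : ℝ) - 1 = ((m + 1 : ℕ) : ℝ) := by push_cast; ring
  have hsub : m + 2 - 1 = m + 1 := by omega
  simp only [hcast, hsub]
  set c := ((m + 2 : ℕ) - 1 : ℝ) * kappa (m + 1) / ((m + 2 : ℕ) * kappa (m + 2))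
  have hlim := ((tendsto_integral_sin_pow_div_pow m).comp tendsto_arccos_one_sub_nhdsGT).const_mul c
    |>.mul (tendsto_arccos_one_sub_div_sqrt.pow (m + 1))
  convert hlim.congr' ?_ using 2
  · rw [rpow_natCast_div_two zero_le_two]
    simp only [c]
    have : (m : ℝ) + 1 ≠ 0 := by positivity
    field_simp
    push_cast
    ring
  · filter_upwards [Ioo_mem_nhdsGT (show (0 : ℝ) < 2 by norm_num)] with ε ⟨h0, h2⟩
    have hθ : 0 < arccos (1 - ε) := arccos_pos.mpr (by linarith)
    simp only [Function.comp_apply, s1, if_pos h2.le, hsub, Nat.add_sub_cancel, c,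
      rpow_natCast_div_two h0.le, div_pow]
    have := sqrt_pos.mpr h0
    field_simp

lemma phi_zero_height (d : ℕ) (lam al u : ℝ) : phi d lam al u 0 = 0 := by
  simp [phi, gfun, s1]

lemma gfun_alpha_zero (lam : ℝ) {u h : ℝ} (hh : 0 ≤ h) (hhu : h < u ^ 2) :
    gfun lam 0 u h = h / u ^ 2 := by
  have hu : 0 < u ^ 2 := hh.trans_lt hhu
  have hu0 : u ≠ 0 := by rintro rfl; simp at hu
  have hε : h / u ^ 2 < 1 := (div_lt_one hu).mpr hhu
  have hfrac :
      (1 / u ^ 2 * h - 1 / 2 * (1 + 1) / u ^ 4 * h ^ 2) / (1 - h / u ^ 2) = h / u ^ 2 := by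
    rw [div_eq_iff (by linarith)]
    field_simp
    ring
  rw [gfun, rpow_zero, hfrac, max_eq_left (by positivity), min_eq_left (by linarith)]

lemma phi_alpha_zero_eq {d : ℕ} (hd : 1 ≤ d) {lam u h B : ℝ} (hu : 0 < u) (hh : 0 < h)
    (hhu : h < u ^ 2) (huB : u ^ (2 * d) = 2 ^ d * B * lam) :
    phi d lam 0 u h = h ^ (((d : ℝ) - 1) / 2) / (kappa d * B) *
      (s1 d (h / u ^ 2) / (h / u ^ 2) ^ (((d : ℝ) - 1) / 2)) * (1 - h / u ^ 2) ^ (d - 1) := by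
  obtain ⟨m, rfl⟩ : ∃ m, d = m + 1 := ⟨d - 1, by omega⟩
  have hcast : ((m + 1 : ℕ) : ℝ) - 1 = m := by push_cast; ring
  have hsqrt : √(h / u ^ 2) = √h / u := by rw [sqrt_div' _ (sq_nonneg u), sqrt_sq hu.le]
  have hB : B ≠ 0 := by
    rintro rfl
    simp [hu.ne'] at huB
  have hκ := (kappa_pos (m + 1)).ne'
  rw [phi, gfun_alpha_zero lam hh.le hhu, hcast, rpow_natCast_div_two hh.le,
    rpow_natCast_div_two (by positivity), hsqrt, rpow_zero, mul_zero, rpow_zero]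
  have := sqrt_pos.mpr hh
  have hscale : lam * 2 ^ (m + 1) / u ^ (m + 1 + 1) = u ^ m / B := by
    field_simp
    linear_combination -huB
  rw [one_add_one_eq_two, mul_one, hscale, div_pow √h]
  field_simp

lemma sqrt_two_mul_rpow_mul_rpow_pow {d : ℕ} (hd : d ≠ 0) {B lam : ℝ} (hB : 0 ≤ B)
    (hlam : 0 ≤ lam) :
    (√2 * B ^ (1 / (2 * (d : ℝ))) * lam ^ (1 / (2 * (d : ℝ)))) ^ (2 * d) = 2 ^ d * B * lam := by
  have hexp : 1 / (2 * (d : ℝ)) = ((2 * d : ℕ) : ℝ)⁻¹ := by push_cast; ring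
  have h2d : 2 * d ≠ 0 := by omega
  rw [hexp, mul_pow, mul_pow, rpow_inv_natCast_pow hB h2d, rpow_inv_natCast_pow hlam h2d, pow_mul,
    sq_sqrt zero_le_two]

/-- for `α = 0`, `C₀ = (2^{(d-1)/2} κ_{d-1}/(d κ_d²))^{1/(2d)}` and
`u_λ = √2 C₀ λ^{1/(2d)}`, `φ_{λ,0,u_λ}(h) → h^{(d-1)/2}` for every fixed `h ≥ 0`. -/
theorem phi_limit_zero (d : ℕ) (hd : 2 ≤ d) (h : ℝ) (hh : 0 ≤ h) :
    Tendsto (fun lam : ℝ =>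
        phi d lam 0
          (Real.sqrt 2 *
              (((2 : ℝ) ^ (((d : ℝ) - 1) / 2) * kappa (d - 1) / ((d : ℝ) * kappa d ^ 2)) ^
                ((1 : ℝ) / (2 * (d : ℝ)))) *
            lam ^ ((1 : ℝ) / (2 * (d : ℝ)))) h)
      atTop (nhds (h ^ (((d : ℝ) - 1) / 2))) := by
  set p : ℝ := ((d : ℝ) - 1) / 2
  have hp : 0 < p := by
    have : (2 : ℝ) ≤ d := by exact_mod_cast hd
    simp only [p]; linarith
  rcases hh.eq_or_lt with rfl | hpos
  · simp [phi_zero_height, zero_rpow hp.ne']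
  set B := 2 ^ p * kappa (d - 1) / (d * kappa d ^ 2)
  have hB : 0 < B := by have := kappa_pos (d - 1); have := kappa_pos d; positivity
  set u := fun lam : ℝ => √2 * B ^ (1 / (2 * (d : ℝ))) * lam ^ (1 / (2 * (d : ℝ)))
  have hu : Tendsto u atTop atTop :=
    (tendsto_rpow_atTop (by positivity)).const_mul_atTop (by positivity)
  have hu2 : Tendsto (fun lam => u lam ^ 2) atTop atTop := (tendsto_pow_atTop two_ne_zero).comp hu
  have hε : Tendsto (fun lam => h / u lam ^ 2) atTop (𝓝[>] 0) :=
    tendsto_nhdsWithin_iff.mpr ⟨tendsto_const_nhds.div_atTop hu2,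
      (hu.eventually_gt_atTop 0).mono fun lam hlam => div_pos hpos (pow_pos hlam 2)⟩
  have hpow : Tendsto (fun ε : ℝ => (1 - ε) ^ (d - 1)) (𝓝 0) (𝓝 1) :=
    ((continuous_const.sub continuous_id).pow (d - 1)).tendsto' 0 1 (by simp)
  have hlim := ((tendsto_s1_div_rpow hd).comp hε).const_mul (h ^ p / (kappa d * B)) |>.mul
    (hpow.comp (hε.mono_right nhdsWithin_le_nhds))
  convert hlim.congr' ?_ using 2
  · have := kappa_pos d
    have := kappa_pos (d - 1)
    simp only [B, p]
    field_simp
  · filter_upwards [eventually_gt_atTop 0, hu.eventually_gt_atTop 0,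
      hu2.eventually_gt_atTop h] with lam hlam hulam hhu
    exact (phi_alpha_zero_eq (by omega) hulam hpos hhu
      (sqrt_two_mul_rpow_mul_rpow_pow (by omega) hB.le hlam.le)).symm
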